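/- arXiv:math/9902160 — 4 statements merged into one kernel-verified Lean document; each statement's English description precedes it below -/
import Mathlib

section
/- Let d ≥ 2 and E = EuclideanSpace ℝ (Fin d). Let ι be a finite type, f : ι → (Fin d → E) a family of tuples, and ε : ι → ℤ coefficients, forming a closed oriented (d-1)-chain, i.e. Alt (Σ_{i : ι} ε i • ∂[f i]) = 0 in Finsupp (Fin (d-1) → E) ℤ. Then Σ_{i : ι} (ε i : ℝ) • N(f i) = 0 in E. -/
open scoped RealInnerProductSpace

/-- The determinant of the matrix whose row `0` is `x` and whose row `k` is `w k - w 0`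
for `k ≥ 1`, as a linear map in `x`. -/
noncomputable def detRowMap {n : ℕ} (w : Fin (n + 1) → EuclideanSpace ℝ (Fin (n + 1))) :
    EuclideanSpace ℝ (Fin (n + 1)) →ₗ[ℝ] ℝ where
  toFun x :=
    Matrix.det ((Matrix.of fun k l : Fin (n + 1) => (w k - w 0) l).updateRow 0 (fun l => x l))
  map_add' x y := by
    simp only []
    have : (fun l => (x + y) l) = (fun l => x l) + (fun l => y l) := rfl
    rw [this, Matrix.det_updateRow_add]
  map_smul' c x := by
    simp only []
    have : (fun l => (c • x) l) = c • (fun l => x l) := rfl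
    rw [this, Matrix.det_updateRow_smul, RingHom.id_apply, smul_eq_mul]

/-- The vector area `N(w)` of a tuple `w : Fin d → EuclideanSpace ℝ (Fin d)` (here `d = n + 1`):
the unique vector such that `⟪N(w), x⟫` is the determinant of the matrix whose row `0` is `x`
and whose row `k` is `w k - w 0` for `k ≥ 1`. -/
noncomputable def vecArea {n : ℕ} (w : Fin (n + 1) → EuclideanSpace ℝ (Fin (n + 1))) :
    EuclideanSpace ℝ (Fin (n + 1)) :=
  (InnerProductSpace.toDual ℝ (EuclideanSpace ℝ (Fin (n + 1)))).symm
    (LinearMap.toContinuousLinearMap (detRowMap w))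

/-- The simplicial boundary `∂[f] = Σ_j (-1)^j • [f ∘ Fin.succAbove j]` of a tuple,
in the free `ℤ`-module on tuples. -/
noncomputable def bdry {m : ℕ} {α : Type*} (f : Fin (m + 1) → α) : (Fin m → α) →₀ ℤ :=
  ∑ j : Fin (m + 1), ((-1) ^ (j : ℕ) : ℤ) • Finsupp.single (f ∘ Fin.succAbove j) 1

/-- The alternation operator, sending a generator `[g]` to `Σ_σ (sign σ) • [g ∘ σ]`. -/
noncomputable def altMap {m : ℕ} {α : Type*} : ((Fin m → α) →₀ ℤ) →ₗ[ℤ] ((Fin m → α) →₀ ℤ) :=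
  Finsupp.lift _ ℤ _ fun g =>
    ∑ σ : Equiv.Perm (Fin m), ((Equiv.Perm.sign σ : ℤ)) • Finsupp.single (g ∘ σ) 1

namespace VecAreaAux

/-- `det` of the matrix with row `0` equal to `x` and row `k+1` equal to `g k`. -/
noncomputable def Dmap {n : ℕ} (x : EuclideanSpace ℝ (Fin (n + 1)))
    (g : Fin n → EuclideanSpace ℝ (Fin (n + 1))) : ℝ :=
  Matrix.det (Matrix.of (Fin.cons (fun l => x l) (fun k l => g k l)))

lemma Dmap_comp_perm {n : ℕ} (x : EuclideanSpace ℝ (Fin (n + 1)))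
    (g : Fin n → EuclideanSpace ℝ (Fin (n + 1))) (σ : Equiv.Perm (Fin n)) :
    Dmap x (g ∘ σ) = (Equiv.Perm.sign σ : ℤ) * Dmap x g := by
  have hmat : (Matrix.of (Fin.cons (fun l => x l) (fun k l => (g ∘ σ) k l)) :
        Matrix (Fin (n+1)) (Fin (n+1)) ℝ) =
      (Matrix.of (Fin.cons (fun l => x l) (fun k l => g k l))).submatrix
        (Equiv.Perm.decomposeFin.symm (0, σ)) id := by
    ext i j
    refine Fin.cases ?_ (fun k => ?_) i
    · simp [Equiv.Perm.decomposeFin_symm_apply_zero]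
    · simp [Equiv.Perm.decomposeFin_symm_apply_succ]
  rw [Dmap, hmat, Matrix.det_permute, Equiv.Perm.decomposeFin.symm_sign]
  simp [Dmap]

lemma detRowMap_matrix_eq_sum {n : ℕ} (w : Fin (n + 1) → EuclideanSpace ℝ (Fin (n + 1)))
    (x : EuclideanSpace ℝ (Fin (n + 1))) :
    Matrix.det ((Matrix.of fun k l : Fin (n + 1) => (w k - w 0) l).updateRow 0 (fun l => x l)) =
      ∑ j : Fin (n + 1), (-1 : ℝ) ^ (j : ℕ) * Dmap x (w ∘ Fin.succAbove j) := by
  set M : Matrix (Fin (n+1)) (Fin (n+1)) ℝ :=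
    (Matrix.of fun k l : Fin (n + 1) => (w k - w 0) l).updateRow 0 (fun l => x l) with hM
  set B : Matrix (Fin (n+2)) (Fin (n+2)) ℝ :=
    Matrix.of (Fin.cons (Fin.cons 0 (fun l => x l)) (fun k => Fin.cons 1 (fun l => w k l)))
    with hB
  set A : Matrix (Fin (n+2)) (Fin (n+2)) ℝ :=
    Matrix.of (Fin.cons (Fin.cons 0 (fun l => x l))
      (Fin.cons (Fin.cons 1 (fun l => w 0 l))
        (fun k => Fin.cons 0 (fun l => (w k.succ - w 0) l)))) with hA
  have hBA : B.det = A.det := by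
    apply Matrix.det_eq_of_forall_row_eq_smul_add_const
      (Fin.cons 0 (Fin.cons 0 (fun _ => 1))) 1
    · rfl
    · intro i j
      refine Fin.cases ?_ (fun m => ?_) i
      · simp [hB, hA]
      · refine Fin.cases ?_ (fun k => ?_) m
        · show B (Fin.succ 0) j = A (Fin.succ 0) j + (0:ℝ) * A 1 j
          simp [hB, hA]
        · show B (Fin.succ (Fin.succ k)) j = A (Fin.succ (Fin.succ k)) j + (1:ℝ) * A 1 j
          have hA1 : A 1 = Fin.cons 1 (fun l => w 0 l) := rfl
          rw [hA1]
          refine Fin.cases ?_ (fun l => ?_) j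
          · simp [hB, hA]
          · show w k.succ l = (w k.succ - w 0) l + 1 * w 0 l
            show w k.succ l = (w k.succ l - w 0 l) + 1 * w 0 l
            ring
  have hsub : A.submatrix (Fin.succ (0 : Fin (n+1))).succAbove Fin.succ = M := by
    ext i j
    refine Fin.cases ?_ (fun k => ?_) i
    · rw [Matrix.submatrix_apply, Fin.succ_succAbove_zero]
      show x j = M 0 j
      rw [hM, Matrix.updateRow_self]
    · rw [Matrix.submatrix_apply, Fin.succ_succAbove_succ]
      show (w k.succ - w 0) j = M k.succ j
      rw [hM, Matrix.updateRow_ne (Fin.succ_ne_zero k)]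
      rfl
  have hAdet : A.det = - M.det := by
    rw [Matrix.det_succ_column_zero, Fin.sum_univ_succ, Fin.sum_univ_succ]
    have h00 : A 0 0 = 0 := rfl
    have h10 : A (Fin.succ 0) 0 = 1 := rfl
    have hk0 : ∀ k : Fin n, A (Fin.succ (Fin.succ k)) 0 = 0 := fun k => rfl
    have h10' : A 1 0 = 1 := rfl
    rw [hsub]
    simp [h00, h10, hk0, h10']
  have hBdet : B.det = ∑ j : Fin (n + 1), (-1 : ℝ) ^ ((j : ℕ) + 1) * Dmap x (w ∘ Fin.succAbove j) := by
    rw [Matrix.det_succ_column_zero, Fin.sum_univ_succ]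
    have h00 : B 0 0 = 0 := rfl
    rw [h00]
    have hterm : ∀ j : Fin (n+1),
        B.submatrix (Fin.succ j).succAbove Fin.succ =
          Matrix.of (Fin.cons (fun l => x l) (fun k l => (w ∘ Fin.succAbove j) k l)) := by
      intro j
      ext i l
      refine Fin.cases ?_ (fun k => ?_) i
      · rw [Matrix.submatrix_apply, Fin.succ_succAbove_zero]
        rfl
      · rw [Matrix.submatrix_apply, Fin.succ_succAbove_succ]
        rfl
    have hB1 : ∀ j : Fin (n+1), B j.succ 0 = 1 := fun j => rfl
    simp only [hterm, Dmap, hB1]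
    simp
  rw [show M.det = -A.det by rw [hAdet]; ring, ← hBA, hBdet]
  rw [← Finset.sum_neg_distrib]
  refine Finset.sum_congr rfl fun j _ => ?_
  rw [pow_succ]
  ring

end VecAreaAux

open VecAreaAux in
/-- for a closed oriented `(d-1)`-chain in `EuclideanSpace ℝ (Fin d)` (`d = n + 1 ≥ 2`),
the sum of the vector areas of the simplices, with their multiplicities, vanishes. -/
theorem sum_vecArea_eq_zero_of_closed_chain (n : ℕ) (hn : 1 ≤ n) (ι : Type) [Fintype ι]
    (f : ι → (Fin (n + 1) → EuclideanSpace ℝ (Fin (n + 1)))) (ε : ι → ℤ)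
    (hclosed : altMap (∑ i : ι, ε i • bdry (f i)) = 0) :
    ∑ i : ι, (ε i : ℝ) • vecArea (f i) = 0 := by
  have key : ∀ x : EuclideanSpace ℝ (Fin (n + 1)),
      ⟪∑ i : ι, (ε i : ℝ) • vecArea (f i), x⟫ = 0 := by
    intro x
    set Φ : ((Fin n → EuclideanSpace ℝ (Fin (n + 1))) →₀ ℤ) →ₗ[ℤ] ℝ :=
      Finsupp.lift ℝ ℤ _ (fun g => Dmap x g) with hΦ
    have hsingle : ∀ (g : Fin n → EuclideanSpace ℝ (Fin (n + 1))) (b : ℤ),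
        Φ (Finsupp.single g b) = b • Dmap x g := by
      intro g b
      simp [hΦ, Finsupp.lift_apply, Finsupp.sum_single_index]
    have halt : Φ.comp altMap = ((Nat.factorial n : ℤ) • Φ) := by
      apply Finsupp.lhom_ext
      intro g b
      have h1 : altMap (Finsupp.single g b) =
          b • ∑ σ : Equiv.Perm (Fin n),
            ((Equiv.Perm.sign σ : ℤ)) • Finsupp.single (g ∘ σ) 1 := by
        simp [altMap, Finsupp.lift_apply, Finsupp.sum_single_index]
      rw [LinearMap.comp_apply, h1, map_smul, map_sum]
      have h2 : ∀ σ : Equiv.Perm (Fin n),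
          Φ ((Equiv.Perm.sign σ : ℤ) • Finsupp.single (g ∘ σ) 1) = Dmap x g := by
        intro σ
        rw [map_zsmul, hsingle, one_smul, Dmap_comp_perm, zsmul_eq_mul]
        rcases Int.units_eq_one_or (Equiv.Perm.sign σ) with h | h <;> simp [h]
      rw [Finset.sum_congr rfl fun σ _ => h2 σ, Finset.sum_const, Finset.card_univ,
        Fintype.card_perm, Fintype.card_fin, LinearMap.smul_apply, hsingle]
      rw [smul_comm]
      simp only [zsmul_eq_mul, nsmul_eq_mul]
      push_cast
      ring
    have hbdry : ∀ v : Fin (n + 1) → EuclideanSpace ℝ (Fin (n + 1)),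
        Φ (bdry v) = ⟪vecArea v, x⟫ := by
      intro v
      have hinner : ⟪vecArea v, x⟫ = detRowMap v x := by
        rw [vecArea, InnerProductSpace.toDual_symm_apply]
        rfl
      have hd : detRowMap v x =
          ∑ j : Fin (n + 1), (-1 : ℝ) ^ (j : ℕ) * Dmap x (v ∘ Fin.succAbove j) :=
        detRowMap_matrix_eq_sum v x
      rw [hinner, hd, bdry, map_sum]
      refine Finset.sum_congr rfl fun j _ => ?_
      rw [map_zsmul, hsingle, one_smul, zsmul_eq_mul]
      push_cast
      ring
    have h0 : Φ (∑ i : ι, ε i • bdry (f i)) = 0 := by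
      have h1 := LinearMap.congr_fun halt (∑ i : ι, ε i • bdry (f i))
      rw [LinearMap.comp_apply, hclosed, map_zero, LinearMap.smul_apply] at h1
      have h2 := h1.symm
      rw [smul_eq_zero] at h2
      rcases h2 with h2 | h2
      · exact absurd h2 (by exact_mod_cast Nat.factorial_ne_zero n)
      · exact h2
    rw [map_sum] at h0
    rw [sum_inner, ← h0]
    refine Finset.sum_congr rfl fun i _ => ?_
    rw [map_zsmul, hbdry, real_inner_smul_left, zsmul_eq_mul]
  have h := key (∑ i : ι, (ε i : ℝ) • vecArea (f i))
  rwa [inner_self_eq_zero] at h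
end

section
/- Let d ≥ 1, E = EuclideanSpace ℝ (Fin d), and let v : Fin (d+1) → E be affinely independent. Then Σ_{i : Fin (d+1)} μH^{d-1}(F i) • n i = 0, where F i = convexHull ℝ {v j | j ≠ i} is the i-th facet, n i is its inner unit normal, and μH^{d-1} is the (d-1)-dimensional Hausdorff measure on E. -/
/-!
Fix a facet `F i` and a vertex `v j` of it, and let `w` be the edges of the simplex issuing from
`v j`, `w'` those among them that span `F i`. The simplex and `F i` are linear images of corner
simplices, so their volumes are `√det (gram w)` and `√det (gram w')` times constants depending only
on the dimension. Splitting `v i - v j` along the unit normal `n i` gives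
`det (gram w) = ⟪n i, v i - v j⟫² * det (gram w')`, so `vol (F i) * ⟪n i, v i - v j⟫` is a fixed
multiple `c` of the volume of the simplex, whatever `i` and `j`. Hence `g i = vol (F i) • n i`
satisfies `⟪g i, v j - v k⟫ = c * (δ i j - δ i k)`, so `∑ i, g i` is orthogonal to every edge, hence
zero.
-/

open Set MeasureTheory Matrix Module
open scoped RealInnerProductSpace Pointwise

theorem Matrix.det_eq_mul_det_submatrix_succAbove {R : Type*} [CommRing R] {k : ℕ}
    (M : Matrix (Fin (k + 1)) (Fin (k + 1)) R) (p : Fin (k + 1)) (h : ∀ j, j ≠ p → M p j = 0) :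
    M.det = M p p * (M.submatrix p.succAbove p.succAbove).det := by
  rw [M.det_succ_row p, Finset.sum_eq_single p (fun j _ hj => by rw [h j hj]; ring) (by simp),
    Even.neg_one_pow ⟨p, rfl⟩, one_mul]

section InnerProductSpace

variable {E : Type*} [NormedAddCommGroup E] [InnerProductSpace ℝ E]

theorem eq_zero_of_forall_inner_eq_zero_of_span_eq_top {s : Set E} (hs : Submodule.span ℝ s = ⊤)
    {x : E} (h : ∀ y ∈ s, ⟪x, y⟫ = 0) : x = 0 := by
  have hx : x ∈ (ℝ ∙ x)ᗮ := by
    refine hs.ge.trans (Submodule.span_le.2 fun y hy => ?_) Submodule.mem_top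
    exact Submodule.mem_orthogonal_singleton_iff_inner_right.2 (h y hy)
  simpa using Submodule.mem_orthogonal_singleton_iff_inner_right.1 hx

theorem sum_eq_zero_of_inner_sub_eq {ι : Type*} [Fintype ι] [DecidableEq ι] {v : ι → E}
    (hv : affineSpan ℝ (range v) = ⊤) {g : ι → E} {c : ℝ}
    (h0 : ∀ i j, j ≠ i → ∀ k, k ≠ i → ⟪g i, v j - v k⟫ = 0)
    (h1 : ∀ i j, j ≠ i → ⟪g i, v i - v j⟫ = c) :
    ∑ i, g i = 0 := by
  have hspan : Submodule.span ℝ (range v -ᵥ range v) = ⊤ := by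
    rw [← vectorSpan_def, ← direction_affineSpan, hv, AffineSubspace.direction_top]
  refine eq_zero_of_forall_inner_eq_zero_of_span_eq_top hspan ?_
  rintro _ ⟨_, ⟨j, rfl⟩, _, ⟨k, rfl⟩, rfl⟩
  have hterm : ∀ i, ⟪g i, v j - v k⟫ = (if i = j then c else 0) - (if i = k then c else 0) := by
    intro i
    by_cases hij : i = j <;> by_cases hik : i = k
    · subst hij hik
      simp
    · subst hij
      simp [hik, h1 i k (Ne.symm hik)]
    · subst hik
      rw [← neg_sub, inner_neg_right, h1 i j (Ne.symm hij)]
      simp [hij]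
    · simp [hij, hik, h0 i j (Ne.symm hij) k (Ne.symm hik)]
  change ⟪∑ i, g i, v j - v k⟫ = 0
  rw [sum_inner, Finset.sum_congr rfl fun i _ => hterm i, Finset.sum_sub_distrib,
    Finset.sum_ite_eq', Finset.sum_ite_eq']
  simp

theorem OrthonormalBasis.det_gram_eq_sq_det {ι : Type*} [Fintype ι] [DecidableEq ι]
    (b : OrthonormalBasis ι ℝ E) (w : ι → E) : (gram ℝ w).det = b.toBasis.det w ^ 2 := by
  rw [gram_eq_conjTranspose_mul b, det_mul, det_conjTranspose, Basis.det_apply, sq]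
  rfl

theorem det_gram_insertNth_of_orthogonal {k : ℕ} (p : Fin (k + 1)) {n : E} (hn : ‖n‖ = 1)
    {u : Fin k → E} (hu : ∀ m, ⟪n, u m⟫ = 0) :
    (gram ℝ (p.insertNth n u)).det = (gram ℝ u).det := by
  rw [det_eq_mul_det_submatrix_succAbove _ p]
  · have hminor : (gram ℝ (p.insertNth n u)).submatrix p.succAbove p.succAbove = gram ℝ u := by
      ext i j
      simp [gram]
    rw [hminor, gram_apply, Fin.insertNth_apply_same, real_inner_self_eq_norm_sq, hn, one_pow,
      one_mul]
  · intro j hj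
    obtain ⟨m, rfl⟩ := Fin.exists_succAbove_eq hj
    simp [gram, hu]

theorem Module.Basis.det_insertNth_eq_inner_mul {k : ℕ} (b : Basis (Fin (k + 1)) ℝ E)
    (p : Fin (k + 1)) {n : E} (hn : ‖n‖ = 1) {u : Fin k → E} (hu : ∀ m, ⟪n, u m⟫ = 0) (a : E) :
    b.det (p.insertNth a u) = ⟪n, a⟫ * b.det (p.insertNth n u) := by
  set r := a - ⟪n, a⟫ • n
  have hr : ⟪n, r⟫ = 0 := by
    simp [r, inner_sub_right, real_inner_smul_right, hn]
  -- `k + 1` vectors orthogonal to `n` cannot span `E`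
  have hdet_r : b.det (p.insertNth r u) = 0 := by
    by_contra hne
    have hspan := ((b.is_basis_iff_det).2 (isUnit_iff_ne_zero.2 hne)).2
    refine one_ne_zero (hn ▸ norm_eq_zero.2 <|
      eq_zero_of_forall_inner_eq_zero_of_span_eq_top hspan ?_)
    rintro _ ⟨j, rfl⟩
    cases j using Fin.succAboveCases p <;> simp [hr, hu]
  calc b.det (p.insertNth a u)
      = b.det (Function.update (p.insertNth n u) p (⟪n, a⟫ • n + r)) := by
        rw [Fin.update_insertNth, add_sub_cancel]
    _ = ⟪n, a⟫ * b.det (p.insertNth n u) := by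
        rw [AlternatingMap.map_update_add, AlternatingMap.map_update_smul, Fin.update_insertNth,
          Fin.update_insertNth, hdet_r, add_zero, smul_eq_mul]

theorem det_gram_insertNth {k : ℕ} (hE : finrank ℝ E = k + 1) (p : Fin (k + 1)) {n : E}
    (hn : ‖n‖ = 1) {u : Fin k → E} (hu : ∀ m, ⟪n, u m⟫ = 0) (a : E) :
    (gram ℝ (p.insertNth a u)).det = ⟪n, a⟫ ^ 2 * (gram ℝ u).det := by
  have : FiniteDimensional ℝ E := Module.finite_of_finrank_eq_succ hE
  let b := (stdOrthonormalBasis ℝ E).reindex (finCongr hE)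
  rw [b.det_gram_eq_sq_det, b.toBasis.det_insertNth_eq_inner_mul p hn hu, mul_pow,
    ← b.det_gram_eq_sq_det, det_gram_insertNth_of_orthogonal p hn hu]

end InnerProductSpace

noncomputable def cornerSimplex (k : ℕ) : Set (EuclideanSpace ℝ (Fin k)) :=
  convexHull ℝ (insert 0 (range (EuclideanSpace.basisFun (Fin k) ℝ)))

instance (k : ℕ) : (μH[k] : Measure (EuclideanSpace ℝ (Fin k))).IsAddHaarMeasure := by
  simpa using isAddHaarMeasure_hausdorffMeasure (E := EuclideanSpace ℝ (Fin k))

theorem hausdorffMeasure_cornerSimplex_pos (k : ℕ) : 0 < μH[k] (cornerSimplex k) := by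
  refine Measure.measure_pos_of_nonempty_interior _ ?_
  rw [cornerSimplex, interior_convexHull_nonempty_iff_affineSpan_eq_top, ← SetLike.coe_set_eq,
    affineSpan_insert_zero]
  simpa using (EuclideanSpace.basisFun (Fin k) ℝ).toBasis.span_eq

theorem hausdorffMeasure_cornerSimplex_ne_top (k : ℕ) : μH[k] (cornerSimplex k) ≠ ⊤ :=
  (((finite_range _).insert 0).isCompact_convexHull (𝕜 := ℝ)).measure_lt_top.ne

section Measure

variable {E : Type*} [NormedAddCommGroup E] [InnerProductSpace ℝ E] [MeasurableSpace E]
  [BorelSpace E]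

theorem hausdorffMeasure_convexHull_insert_zero {k : ℕ} (w : Fin k → E) :
    μH[k] (convexHull ℝ (insert 0 (range w))) =
      ENNReal.ofReal √(gram ℝ w).det * μH[k] (cornerSimplex k) := by
  let b := EuclideanSpace.basisFun (Fin k) ℝ
  let f := b.toBasis.constr ℝ w
  have himage : f '' cornerSimplex k = convexHull ℝ (insert 0 (range w)) := by
    rw [cornerSimplex, f.image_convexHull, image_insert_eq, map_zero, ← range_comp]
    congr 3
    ext m
    simp [f, b]
  have hnormDet : f.normDet = √(gram ℝ w).det := by
    have hsq := f.normDet_sq_eq_det_gram b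
    have hfb : ∀ m, f (b m) = w m := fun m => by simp [f]
    simp only [hfb, RCLike.ofReal_real_eq_id, id] at hsq
    rw [← hsq, Real.sqrt_sq f.normDet_nonneg]
  simpa [himage, hnormDet] using f.hausdorffMeasure_image (cornerSimplex k)

theorem hausdorffMeasure_convexHull_image_insert_succAbove {k : ℕ} (d : ℝ) (v : Fin (k + 1) → E)
    (q : Fin (k + 1)) (s : Set (Fin k)) :
    μH[d] (convexHull ℝ (v '' insert q (q.succAbove '' s))) =
      μH[d] (convexHull ℝ (insert 0 ((fun m => v (q.succAbove m) - v q) '' s))) := by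
  have hset : v '' insert q (q.succAbove '' s) =
      v q +ᵥ insert 0 ((fun m => v (q.succAbove m) - v q) '' s) := by
    rw [image_insert_eq, image_image, vadd_set_insert, ← image_vadd, image_image]
    simp
  rw [hset, convexHull_vadd, ← image_vadd]
  exact (IsometryEquiv.constVAdd (X := E) (v q)).hausdorffMeasure_image d _

theorem hausdorffMeasure_facet_mul_inner {e : ℕ} (hE : finrank ℝ E = e + 1) (v : Fin (e + 2) → E)
    {i j : Fin (e + 2)} (hji : j ≠ i) {n : E} (hn : ‖n‖ = 1)
    (horth : ∀ k, k ≠ i → ∀ l, l ≠ i → ⟪n, v k - v l⟫ = 0) :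
    μH[e] (convexHull ℝ (v '' {k | k ≠ i})) * ENNReal.ofReal |⟪n, v i - v j⟫| *
        μH[(e + 1 : ℕ)] (cornerSimplex (e + 1)) =
      μH[(e + 1 : ℕ)] (convexHull ℝ (range v)) * μH[e] (cornerSimplex e) := by
  obtain ⟨p, rfl⟩ := Fin.exists_succAbove_eq hji.symm
  set w : Fin (e + 1) → E := fun m => v (j.succAbove m) - v j
  have hvertices : range v = v '' insert j (j.succAbove '' univ) := by
    rw [image_univ, Fin.range_succAbove, insert_eq, union_compl_self, image_univ]
  have hfacet : {k | k ≠ j.succAbove p} = insert j (j.succAbove '' range p.succAbove) := by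
    ext k
    rcases eq_or_ne k j with rfl | hk
    · simp [hji]
    · obtain ⟨m, rfl⟩ := Fin.exists_succAbove_eq hk
      simp [Fin.range_succAbove, hk]
  have hw : ∀ m, ⟪n, w (p.succAbove m)⟫ = 0 := fun m =>
    horth _ ((Fin.succAbove_right_injective).ne (Fin.succAbove_ne p m)) _ hji
  have hgram : (gram ℝ w).det = ⟪n, w p⟫ ^ 2 * (gram ℝ (w ∘ p.succAbove)).det := by
    conv_lhs => rw [← Fin.insertNth_self_removeNth p w]
    exact det_gram_insertNth hE p hn hw (w p)
  rw [hvertices, hfacet, hausdorffMeasure_convexHull_image_insert_succAbove,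
    hausdorffMeasure_convexHull_image_insert_succAbove, image_univ, ← range_comp,
    hausdorffMeasure_convexHull_insert_zero, hausdorffMeasure_convexHull_insert_zero, hgram,
    Real.sqrt_mul' _ (posSemidef_gram ℝ _).det_nonneg, Real.sqrt_sq_eq_abs,
    ENNReal.ofReal_mul (abs_nonneg _)]
  ring

end Measure

/-- Minkowski's theorem for a `d`-simplex: if `v : Fin (d+1) → EuclideanSpace ℝ (Fin d)`
is affinely independent, `F i = convexHull ℝ {v j | j ≠ i}` are its facets and `n i` the inner
unit normals, then `Σ_i μH^{d-1}(F i) • n i = 0`. -/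
theorem simplex_minkowski (d : ℕ) (hd : 1 ≤ d)
    (v : Fin (d + 1) → EuclideanSpace ℝ (Fin d)) (hv : AffineIndependent ℝ v)
    (n : Fin (d + 1) → EuclideanSpace ℝ (Fin d))
    (hunit : ∀ i, ‖n i‖ = 1)
    (horth : ∀ i, ∀ j, j ≠ i → ∀ k, k ≠ i → ⟪n i, v j - v k⟫ = (0 : ℝ))
    (hinner : ∀ i, ∀ j, j ≠ i → (0 : ℝ) < ⟪n i, v i - v j⟫) :
    ∑ i : Fin (d + 1),
        (μH[(d : ℝ) - 1] (convexHull ℝ (v '' {j | j ≠ i}))).toReal • n i = 0 := by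
  obtain ⟨e, rfl⟩ : ∃ e, d = e + 1 := ⟨d - 1, by omega⟩
  rw [show ((e + 1 : ℕ) : ℝ) - 1 = e by push_cast; ring]
  set F := fun i => (μH[e] (convexHull ℝ (v '' {k | k ≠ i}))).toReal
  set κ := (μH[(e + 1 : ℕ)] (cornerSimplex (e + 1))).toReal
  set c := (μH[(e + 1 : ℕ)] (convexHull ℝ (range v))).toReal * (μH[e] (cornerSimplex e)).toReal
  have hfacet : ∀ i j, j ≠ i → F i * ⟪n i, v i - v j⟫ * κ = c := by
    intro i j hji
    have h := congrArg ENNReal.toReal <| hausdorffMeasure_facet_mul_inner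
      finrank_euclideanSpace_fin v hji (hunit i) (horth i)
    rwa [ENNReal.toReal_mul, ENNReal.toReal_mul, ENNReal.toReal_mul, ENNReal.toReal_ofReal
      (abs_nonneg _), abs_of_pos (hinner i j hji)] at h
  have hsum := sum_eq_zero_of_inner_sub_eq (c := c) (g := fun i => κ • F i • n i)
    (hv.affineSpan_eq_top_iff_card_eq_finrank_add_one.2 (by simp))
    (fun i j hj k hk => by simp [real_inner_smul_left, horth i j hj k hk])
    (fun i j hj => by rw [real_inner_smul_left, real_inner_smul_left, ← hfacet i j hj]; ring)
  rw [← Finset.smul_sum] at hsum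
  exact (smul_eq_zero.1 hsum).resolve_left
    (ENNReal.toReal_pos (hausdorffMeasure_cornerSimplex_pos _).ne'
      (hausdorffMeasure_cornerSimplex_ne_top _)).ne'
end

section
/- Let d ≥ 2 and E = EuclideanSpace ℝ (Fin d). Let ι be a finite type, f : ι → (Fin d → E), and ε : ι → ℤ, forming a closed oriented (d-1)-chain, i.e. Alt (Σ_{i : ι} ε i • ∂[f i]) = 0 in Finsupp (Fin (d-1) → E) ℤ. Then the generalized volume is independent of the base point: the function sending p ∈ E to Σ_{i : ι} (ε i : ℝ) * det M_i(p), where M_i(p) is the d × d matrix whose k-th row (k : Fin d) is the coordinate vector of f i k - p, is constant on E. -/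
open Matrix Equiv

/-- Multilinear expansion of a determinant whose rows are all shifted by `v`. -/
lemma det_rows_add {d : ℕ} (a : Fin d → Fin d → ℝ) (v : Fin d → ℝ) :
    Matrix.det (Matrix.of fun k => a k + v) =
      Matrix.det (Matrix.of a) +
        ∑ j : Fin d, Matrix.det (Matrix.of (Function.update a j v)) := by
  classical
  have h := (Matrix.detRowAlternating (R := ℝ) (n := Fin d)).toMultilinearMap.map_add_univ
      a (fun _ => v)
  have hL : Matrix.det (Matrix.of fun k => a k + v) =
      (Matrix.detRowAlternating (R := ℝ) (n := Fin d)).toMultilinearMap (a + fun _ => v) := rfl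
  rw [hL, h]
  have hzero : ∀ s ∈ (Finset.univ : Finset (Finset (Fin d))),
      s ∉ insert Finset.univ (Finset.univ.image fun j : Fin d => Finset.univ.erase j) →
      (Matrix.detRowAlternating (R := ℝ) (n := Fin d)).toMultilinearMap
        (s.piecewise a fun _ => v) = 0 := by
    intro s _ hs
    simp only [Finset.mem_insert, Finset.mem_image, Finset.mem_univ, true_and,
      not_or, not_exists] at hs
    obtain ⟨hs1, hs2⟩ := hs
    obtain ⟨j, hj⟩ : ∃ j, j ∉ s := by
      by_contra hc
      push_neg at hc
      exact hs1 (Finset.eq_univ_iff_forall.mpr hc)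
    obtain ⟨j', hj', hjj'⟩ : ∃ j', j' ∉ s ∧ j' ≠ j := by
      by_contra hc
      push_neg at hc
      refine hs2 j ?_
      ext k
      simp only [Finset.mem_erase, Finset.mem_univ, and_true]
      constructor
      · intro hk
        by_contra hks
        exact hk (hc k hks)
      · intro hk hkj
        exact hj (hkj ▸ hk)
    exact (Matrix.detRowAlternating (R := ℝ) (n := Fin d)).map_eq_zero_of_eq _
      (by simp [Finset.piecewise_eq_of_notMem _ _ _ hj,
        Finset.piecewise_eq_of_notMem _ _ _ hj']) hjj'
  rw [← Finset.sum_subset (Finset.subset_univ _) hzero]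
  have huniv : Finset.univ ∉ Finset.univ.image fun j : Fin d => Finset.univ.erase j := by
    simp only [Finset.mem_image, Finset.mem_univ, true_and, not_exists]
    intro j hj
    have := Finset.mem_univ j
    rw [← hj] at this
    simp at this
  have hinj : ∀ j ∈ (Finset.univ : Finset (Fin d)), ∀ j' ∈ (Finset.univ : Finset (Fin d)),
      Finset.univ.erase j = Finset.univ.erase j' → j = j' := by
    intro j _ j' _ hjj
    by_contra hne
    have : j ∈ Finset.univ.erase j' := by simp [hne]
    rw [← hjj] at this
    simp at this
  rw [Finset.sum_insert huniv, Finset.sum_image hinj]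
  congr 1
  · simp [Finset.piecewise_univ]
    rfl
  · refine Finset.sum_congr rfl fun j _ => ?_
    rw [Finset.piecewise_erase_univ]
    rfl

/-- Moving the updated row to the top costs a sign `(-1)^j`. -/
lemma det_update_eq_cons {n : ℕ} (a : Fin (n + 1) → Fin (n + 1) → ℝ) (v : Fin (n + 1) → ℝ)
    (j : Fin (n + 1)) :
    Matrix.det (Matrix.of (Function.update a j v)) =
      (-1 : ℝ) ^ (j : ℕ) *
        Matrix.det (Matrix.of (Fin.cons v (a ∘ j.succAbove))) := by
  have key : Function.update a j v =
      fun k => (Fin.cons v (a ∘ j.succAbove) : Fin (n + 1) → Fin (n + 1) → ℝ)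
        (j.cycleRange k) := by
    funext k
    rcases eq_or_ne k j with rfl | hk
    · simp [Fin.cycleRange_self]
    · obtain ⟨m, rfl⟩ := Fin.exists_succAbove_eq hk
      rw [Function.update_of_ne hk, Fin.cycleRange_succAbove, Fin.cons_succ]
      rfl
  have : Matrix.of (Function.update a j v) =
      (Matrix.of (Fin.cons v (a ∘ j.succAbove) : Fin (n + 1) → Fin (n + 1) → ℝ)).submatrix
        j.cycleRange id := by
    ext k l
    rw [key]
    rfl
  rw [this, Matrix.det_permute, Fin.sign_cycleRange]
  push_cast
  ring

/-- Permuting the non-top rows by `σ` multiplies the determinant by `sign σ`. -/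
lemma det_cons_perm {n : ℕ} (v : Fin (n + 1) → ℝ) (b : Fin n → Fin (n + 1) → ℝ)
    (σ : Equiv.Perm (Fin n)) :
    Matrix.det (Matrix.of (Fin.cons v (b ∘ σ))) =
      (Equiv.Perm.sign σ : ℤ) * Matrix.det (Matrix.of (Fin.cons v b)) := by
  have key : (Fin.cons v (b ∘ σ) : Fin (n + 1) → Fin (n + 1) → ℝ) =
      fun k => (Fin.cons v b : Fin (n + 1) → Fin (n + 1) → ℝ)
        ((Equiv.Perm.decomposeFin.symm (0, σ)) k) := by
    funext k
    induction k using Fin.cases with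
    | zero => simp
    | succ m => simp [Equiv.Perm.decomposeFin_symm_apply_succ]
  have h2 : Matrix.of (Fin.cons v (b ∘ σ) : Fin (n + 1) → Fin (n + 1) → ℝ) =
      (Matrix.of (Fin.cons v b : Fin (n + 1) → Fin (n + 1) → ℝ)).submatrix
        (Equiv.Perm.decomposeFin.symm (0, σ)) id := by
    ext k l
    rw [key]
    rfl
  rw [h2, Matrix.det_permute, Equiv.Perm.decomposeFin.symm_sign]
  simp



/-- for a closed oriented `(d-1)`-chain in `EuclideanSpace ℝ (Fin d)`
(`d = n + 1 ≥ 2`), the generalized volume is independent of the base point: the function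
`p ↦ Σ_i ε i * det M_i(p)`, where the `k`-th row of `M_i(p)` is the coordinate vector of
`f i k - p`, is constant. -/
theorem generalized_volume_base_point_independent (n : ℕ) (hn : 1 ≤ n) (ι : Type) [Fintype ι]
    (f : ι → (Fin (n + 1) → EuclideanSpace ℝ (Fin (n + 1)))) (ε : ι → ℤ)
    (hclosed : altMap (∑ i : ι, ε i • bdry (f i)) = 0)
    (p q : EuclideanSpace ℝ (Fin (n + 1))) :
    ∑ i : ι, (ε i : ℝ) * Matrix.det (Matrix.of fun k l : Fin (n + 1) => (f i k - p) l) =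
      ∑ i : ι, (ε i : ℝ) * Matrix.det (Matrix.of fun k l : Fin (n + 1) => (f i k - q) l) := by
  classical
  set D : (Fin n → EuclideanSpace ℝ (Fin (n + 1))) → ℝ := fun g =>
    Matrix.det (Matrix.of (Fin.cons (fun l => (q - p) l) (fun m l => (g m - q) l) :
      Fin (n + 1) → Fin (n + 1) → ℝ)) with hD
  set L : ((Fin n → EuclideanSpace ℝ (Fin (n + 1))) →₀ ℤ) →ₗ[ℤ] ℝ :=
    Finsupp.lift ℝ ℤ _ D with hLdef
  have hLsingle : ∀ g, L (Finsupp.single g 1) = D g := by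
    intro g
    simp [hLdef, Finsupp.lift_apply, Finsupp.sum_single_index]
  have hDperm : ∀ (g : Fin n → EuclideanSpace ℝ (Fin (n + 1))) (σ : Equiv.Perm (Fin n)),
      D (g ∘ σ) = (Equiv.Perm.sign σ : ℤ) * D g := by
    intro g σ
    exact det_cons_perm (fun l => (q - p) l) (fun m l => (g m - q) l) σ
  -- the alternation identity : L ∘ altMap = n! • L
  have hLalt : ∀ x, L (altMap x) = (n.factorial : ℤ) • L x := by
    have : (L ∘ₗ altMap) = (n.factorial : ℤ) • L := by
      refine Finsupp.lhom_ext fun g b => ?_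
      have hb : (Finsupp.single g b : (Fin n → EuclideanSpace ℝ (Fin (n + 1))) →₀ ℤ) =
          b • Finsupp.single g 1 := by
        simp [Finsupp.smul_single]
      rw [hb, _root_.map_smul, _root_.map_smul]
      congr 1
      have haltg : altMap (Finsupp.single g 1) =
          ∑ σ : Equiv.Perm (Fin n), ((Equiv.Perm.sign σ : ℤ)) • Finsupp.single (g ∘ σ) 1 := by
        simp [altMap, Finsupp.lift_apply, Finsupp.sum_single_index]
      simp only [LinearMap.comp_apply, LinearMap.smul_apply, haltg, map_sum, _root_.map_smul]
      have : ∀ σ : Equiv.Perm (Fin n),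
          (Equiv.Perm.sign σ : ℤ) • L (Finsupp.single (g ∘ σ) 1) = D g := by
        intro σ
        rw [hLsingle, hDperm]
        rcases Int.units_eq_one_or (Equiv.Perm.sign σ) with h | h <;> simp [h]
      rw [Finset.sum_congr rfl fun σ _ => this σ, Finset.sum_const, hLsingle]
      simp [Fintype.card_perm, mul_comm]
    intro x
    have := congrArg (fun m => m x) this
    simpa using this
  -- hence L kills the chain
  have hLc : L (∑ i : ι, ε i • bdry (f i)) = 0 := by
    have h0 : (n.factorial : ℤ) • L (∑ i : ι, ε i • bdry (f i)) = 0 := by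
      rw [← hLalt, hclosed, map_zero]
    have : (n.factorial : ℝ) * L (∑ i : ι, ε i • bdry (f i)) = 0 := by
      rw [zsmul_eq_mul] at h0
      exact_mod_cast h0
    exact (mul_eq_zero.mp this).resolve_left (by positivity)
  -- value of L on each boundary
  have hLbdry : ∀ i : ι, L (bdry (f i)) =
      ∑ j : Fin (n + 1), (-1 : ℝ) ^ (j : ℕ) * D (f i ∘ Fin.succAbove j) := by
    intro i
    rw [bdry, map_sum]
    refine Finset.sum_congr rfl fun j _ => ?_
    rw [_root_.map_smul, hLsingle, zsmul_eq_mul]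
    push_cast
    ring
  -- the key pointwise identity
  have hkey : ∀ i : ι,
      Matrix.det (Matrix.of fun k l : Fin (n + 1) => (f i k - p) l) =
        Matrix.det (Matrix.of fun k l : Fin (n + 1) => (f i k - q) l) + L (bdry (f i)) := by
    intro i
    set a : Fin (n + 1) → Fin (n + 1) → ℝ := fun k l => (f i k - q) l with ha
    set v : Fin (n + 1) → ℝ := fun l => (q - p) l with hv
    have hrows : (fun k l : Fin (n + 1) => (f i k - p) l) = fun k => a k + v := by
      funext k l
      simp [ha, hv]
    have h2 : ∀ j : Fin (n + 1), Matrix.det (Matrix.of (Function.update a j v)) =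
        (-1 : ℝ) ^ (j : ℕ) * D (f i ∘ Fin.succAbove j) := by
      intro j
      rw [det_update_eq_cons]
      rfl
    rw [hrows, det_rows_add, hLbdry i, Finset.sum_congr rfl fun j _ => h2 j]
  calc ∑ i : ι, (ε i : ℝ) * Matrix.det (Matrix.of fun k l : Fin (n + 1) => (f i k - p) l)
      = ∑ i : ι, ((ε i : ℝ) * Matrix.det (Matrix.of fun k l : Fin (n + 1) => (f i k - q) l)
          + (ε i : ℝ) * L (bdry (f i))) := by
        refine Finset.sum_congr rfl fun i _ => ?_
        rw [hkey i]
        ring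
    _ = (∑ i : ι, (ε i : ℝ) * Matrix.det (Matrix.of fun k l : Fin (n + 1) => (f i k - q) l))
          + ∑ i : ι, (ε i : ℝ) * L (bdry (f i)) := Finset.sum_add_distrib
    _ = ∑ i : ι, (ε i : ℝ) * Matrix.det (Matrix.of fun k l : Fin (n + 1) => (f i k - q) l) := by
        have : ∑ i : ι, (ε i : ℝ) * L (bdry (f i)) = L (∑ i : ι, ε i • bdry (f i)) := by
          rw [map_sum]
          refine Finset.sum_congr rfl fun i _ => ?_
          rw [_root_.map_smul, zsmul_eq_mul]
        rw [this, hLc, add_zero]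
end

section
/- Let d ≥ 1. For every family v : Fin (d+1) → (Fin d → ℝ) and all points p, q : Fin d → ℝ, Σ_{i : Fin (d+1)} (-1)^i * det M_i(p) = Σ_{i : Fin (d+1)} (-1)^i * det M_i(q), where M_i(p) is the d × d matrix whose k-th row (k : Fin d) is v (Fin.succAbove i k) - p, i.e. the rows are the vectors from p to the vertices v j with j ≠ i, in increasing order of j. -/
/-!
Both sides are the Laplace expansion, along its first column, of the determinant of the
`(d+1) × (d+1)` matrix with rows `(1, v i - p)`. Subtracting `q - p` times that column of ones
from the other columns turns the matrix for `p` into the one for `q` without changing the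
determinant.
-/

namespace Matrix

variable {R : Type*} [CommRing R] {n : ℕ}

def coneMatrix (v : Fin (n + 1) → Fin n → R) (p : Fin n → R) :
    Matrix (Fin (n + 1)) (Fin (n + 1)) R :=
  of fun i => Fin.cons 1 (v i - p)

theorem det_coneMatrix_eq_alternating_sum (v : Fin (n + 1) → Fin n → R) (p : Fin n → R) :
    (coneMatrix v p).det =
      ∑ i : Fin (n + 1), (-1 : R) ^ (i : ℕ) * det (of fun k => v (Fin.succAbove i k) - p) := by
  rw [det_succ_column_zero]
  refine Finset.sum_congr rfl fun i _ => ?_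
  simp only [coneMatrix, of_apply, Fin.cons_zero, mul_one]
  rfl

theorem det_coneMatrix_eq (v : Fin (n + 1) → Fin n → R) (p q : Fin n → R) :
    (coneMatrix v p).det = (coneMatrix v q).det := by
  rw [← det_transpose, ← det_transpose (coneMatrix v q)]
  refine det_eq_of_forall_row_eq_smul_add_const (Fin.cons 0 (q - p)) 0 rfl fun j i => ?_
  refine Fin.cases ?_ (fun l => ?_) j
  · simp [coneMatrix]
  · simp only [coneMatrix, transpose_apply, of_apply, Fin.cons_zero, Fin.cons_succ,
      Pi.sub_apply]
    ring

end Matrix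

theorem alt_sum_facet_dets_base_point_independent_general (d : ℕ)
    (v : Fin (d + 1) → (Fin d → ℝ)) (p q : Fin d → ℝ) :
    ∑ i : Fin (d + 1), (-1 : ℝ) ^ (i : ℕ) *
        Matrix.det (Matrix.of fun k => v (Fin.succAbove i k) - p) =
      ∑ i : Fin (d + 1), (-1 : ℝ) ^ (i : ℕ) *
        Matrix.det (Matrix.of fun k => v (Fin.succAbove i k) - q) := by
  rw [← Matrix.det_coneMatrix_eq_alternating_sum, ← Matrix.det_coneMatrix_eq_alternating_sum,
    Matrix.det_coneMatrix_eq v p q]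

/-- The alternating sum over the facets of a (possibly degenerate) `d`-simplex
`v : Fin (d+1) → (Fin d → ℝ)` of the determinants of the matrices whose rows are the vectors
from a base point `p` to the facet vertices does not depend on the base point `p`. -/
theorem alt_sum_facet_dets_base_point_independent (d : ℕ) (hd : 1 ≤ d)
    (v : Fin (d + 1) → (Fin d → ℝ)) (p q : Fin d → ℝ) :
    ∑ i : Fin (d + 1), (-1 : ℝ) ^ (i : ℕ) *
        Matrix.det (Matrix.of fun k => v (Fin.succAbove i k) - p) =
      ∑ i : Fin (d + 1), (-1 : ℝ) ^ (i : ℕ) *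
        Matrix.det (Matrix.of fun k => v (Fin.succAbove i k) - q) :=
  alt_sum_facet_dets_base_point_independent_general d v p q
end
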